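/- Let f₁, f₂ be positive constants and G = g^{f₁,f₂}. The horizontal component of the curvature of (TM,G) on horizontal vectors is R^G(X^h,Y^h)Z^h = R(X^h,Y^h)Z^h − ½(∇_{X^h}ℛ)(Y^h,Z^h) + ½(∇_{Y^h}ℛ)(X^h,Z^h) + A(ℛ(X^h,Y^h),Z^h) − ½A(X^h,ℛ(Y^h,Z^h)) + ½A(Y^h,ℛ(X^h,Z^h)). -/
import Mathlib


/-!
An abstract model of the calculus of vector fields on the total space `TM` of the
tangent bundle of a Riemannian manifold `(M,g)` with Levi-Civita connection `∇`
(Mathlib has no Riemannian curvature theory, so the setting of the paper is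
axiomatised).  Here

* `F` plays the role of the commutative ℝ-algebra of smooth functions on `TM`;
* `VF` plays the role of the `F`-module of vector fields on `TM`, i.e. sections of
  `TTM = H ⊕ V`, where both subbundles are identified with the pull-back `π*TM`;
* `lie` is the Lie bracket of vector fields, `der X f` is the derivative `X(f)`;
* `h`, `v` are the horizontal and vertical projections, `X = X^h + X^v`;
* `inn` is the Sasaki metric `⟨·,·⟩ = π*g ⊕ π*g` on `H ⊕ V`;
* `nab` is the metric connection `∇* = π*∇ ⊕ π*∇` on `TTM`;
* `xi` is the canonical vertical vector field `ξ`, `ξ_u = u`, with `∇*_X ξ = X^v`;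
* `Rop` is the pull-back `π*R` of the curvature tensor `R` of `M`, acting
  diagonally on `H ⊕ V`; it is the curvature of `∇*`, and the torsion of `∇*` is
  the tensor `ℛ(X,Y) = π*R(X,Y)ξ`;
* `theta` is the endomorphism `θ` identifying `H` with `V` (and vanishing on `V`);
* `nng f` means that the function `f : F` is pointwise nonnegative.
-/
structure SasakiModel where
  F : Type
  VF : Type
  [instCommRing : CommRing F]
  [instAlgebra : Algebra ℝ F]
  [instAddCommGroup : AddCommGroup VF]
  [instModule : Module F VF]
  lie : VF → VF → VF
  der : VF → F → F
  h : VF → VF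
  v : VF → VF
  inn : VF → VF → F
  nab : VF → VF → VF
  xi : VF
  Rop : VF → VF → VF → VF
  theta : VF → VF
  nng : F → Prop
  der_add : ∀ X Y f, der (X + Y) f = der X f + der Y f
  der_smul : ∀ (g : F) (X : VF) (f : F), der (g • X) f = g * der X f
  der_leibniz : ∀ X f g, der X (f * g) = der X f * g + f * der X g
  der_const : ∀ (X : VF) (c : ℝ), der X (algebraMap ℝ F c) = 0
  der_lie : ∀ X Y f, der (lie X Y) f = der X (der Y f) - der Y (der X f)
  lie_antisymm : ∀ X Y, lie X Y = -lie Y X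
  h_add : ∀ X Y, h (X + Y) = h X + h Y
  h_smul : ∀ (f : F) (X : VF), h (f • X) = f • h X
  v_add : ∀ X Y, v (X + Y) = v X + v Y
  v_smul : ∀ (f : F) (X : VF), v (f • X) = f • v X
  h_add_v : ∀ X, h X + v X = X
  h_h : ∀ X, h (h X) = h X
  v_v : ∀ X, v (v X) = v X
  h_of_v : ∀ X, h (v X) = 0
  v_of_h : ∀ X, v (h X) = 0
  inn_symm : ∀ X Y, inn X Y = inn Y X
  inn_add_left : ∀ X Y Z, inn (X + Y) Z = inn X Z + inn Y Z
  inn_smul_left : ∀ (f : F) (X Y : VF), inn (f • X) Y = f * inn X Y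
  inn_hv : ∀ X Y, inn (h X) (v Y) = 0
  inn_nonneg : ∀ X, nng (inn X X)
  inn_nondeg : ∀ X, (∀ Y, inn X Y = 0) → X = 0
  nng_add : ∀ f g, nng f → nng g → nng (f + g)
  nng_mul : ∀ f g, nng f → nng g → nng (f * g)
  nng_sq : ∀ f, nng (f * f)
  nab_add_left : ∀ X Y Z, nab (X + Y) Z = nab X Z + nab Y Z
  nab_smul_left : ∀ (f : F) (X Y : VF), nab (f • X) Y = f • nab X Y
  nab_add_right : ∀ X Y Z, nab X (Y + Z) = nab X Y + nab X Z
  nab_leibniz : ∀ (X : VF) (f : F) (Y : VF), nab X (f • Y) = der X f • Y + f • nab X Y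
  nab_metric : ∀ X Y Z, der X (inn Y Z) = inn (nab X Y) Z + inn Y (nab X Z)
  nab_h : ∀ X Y, h (nab X (h Y)) = nab X (h Y)
  nab_v : ∀ X Y, v (nab X (v Y)) = nab X (v Y)
  v_xi : v xi = xi
  nab_xi : ∀ X, nab X xi = v X
  Rop_add₁ : ∀ X X' Y Z, Rop (X + X') Y Z = Rop X Y Z + Rop X' Y Z
  Rop_smul₁ : ∀ (f : F) (X Y Z : VF), Rop (f • X) Y Z = f • Rop X Y Z
  Rop_add₃ : ∀ X Y Z Z', Rop X Y (Z + Z') = Rop X Y Z + Rop X Y Z'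
  Rop_smul₃ : ∀ (f : F) (X Y Z : VF), Rop X Y (f • Z) = f • Rop X Y Z
  Rop_horiz : ∀ X Y Z, Rop X Y Z = Rop (h X) (h Y) Z
  Rop_antisymm : ∀ X Y Z, Rop X Y Z = -Rop Y X Z
  Rop_skew : ∀ X Y Z W, inn (Rop X Y Z) W = -inn (Rop X Y W) Z
  Rop_v : ∀ X Y Z, v (Rop X Y (v Z)) = Rop X Y (v Z)
  Rop_h : ∀ X Y Z, h (Rop X Y (h Z)) = Rop X Y (h Z)
  Rop_parallel : ∀ X Y Z W, nab (v X) (Rop Y Z W) =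
    Rop (nab (v X) Y) Z W + Rop Y (nab (v X) Z) W + Rop Y Z (nab (v X) W)
  curv_nab : ∀ X Y Z, nab X (nab Y Z) - nab Y (nab X Z) - nab (lie X Y) Z = Rop X Y Z
  torsion_nab : ∀ X Y, nab X Y - nab Y X - lie X Y = Rop X Y xi
  theta_add : ∀ X Y, theta (X + Y) = theta X + theta Y
  theta_smul : ∀ (f : F) (X : VF), theta (f • X) = f • theta X
  theta_vert : ∀ X, v (theta X) = theta X
  theta_horiz : ∀ X, theta X = theta (h X)
  theta_inn : ∀ X Y, inn (theta X) (theta Y) = inn (h X) (h Y)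

attribute [instance] SasakiModel.instCommRing SasakiModel.instAlgebra
  SasakiModel.instAddCommGroup SasakiModel.instModule

namespace SasakiModel

variable (M : SasakiModel)

/-- Multiplication of a vector field by a real constant. -/
def sm (c : ℝ) (X : M.VF) : M.VF := algebraMap ℝ M.F c • X

/-- Real constants as functions on `TM`. -/
def cst (c : ℝ) : M.F := algebraMap ℝ M.F c

/-- The tensor `ℛ(X,Y) = π*R(X,Y)ξ`. -/
def calR (X Y : M.VF) : M.VF := M.Rop X Y M.xi

/-- The curvature operator of a connection `D` on `TTM`. -/
def curvOf (D : M.VF → M.VF → M.VF) (X Y Z : M.VF) : M.VF :=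
  D X (D Y Z) - D Y (D X Z) - D (M.lie X Y) Z

/-- The covariant derivative `(∇*_X ℛ)(Y,Z)` of the tensor `ℛ`. -/
def nabR (X Y Z : M.VF) : M.VF :=
  M.nab X (M.calR Y Z) - M.calR (M.nab X Y) Z - M.calR Y (M.nab X Z)

/-- The covariant derivative `(∇*_X (π*R))(Y,Z)W`; for horizontal `X = X^h` this is
the pull-back of `(∇_{X^h} R)(Y,Z)W`. -/
def DRop (X Y Z W : M.VF) : M.VF :=
  M.nab X (M.Rop Y Z W) - M.Rop (M.nab X Y) Z W - M.Rop Y (M.nab X Z) W -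
    M.Rop Y Z (M.nab X W)

/-- The exterior covariant derivative `d^∇C` of a 1-form `C` with values in
`End TTM`, with respect to `∇ = ∇* ⊕ ∇*`:
`d^∇C(X,Y) = ∇_X C_Y - ∇_Y C_X - C_{[X,Y]}` as an endomorphism, applied to `Z`. -/
def dC (C : M.VF → M.VF → M.VF) (X Y Z : M.VF) : M.VF :=
  M.nab X (C Y Z) - C Y (M.nab X Z) - (M.nab Y (C X Z) - C X (M.nab Y Z)) -
    C (M.lie X Y) Z

/-- The weighted Sasaki metric `G = g^{f₁,f₂} = f₁ π*g ⊕ f₂ π*g` on `H ⊕ V`,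
for constant weights `f₁, f₂`. -/
def Gmet (f₁ f₂ : ℝ) (X Y : M.VF) : M.F :=
  M.cst f₁ * M.inn (M.h X) (M.h Y) + M.cst f₂ * M.inn (M.v X) (M.v Y)

end SasakiModel

namespace SasakiModel

variable (M : SasakiModel)

/-- The Levi-Civita connection `∇^G = ∇* − ½ℛ + A` of the weighted Sasaki metric
`G = g^{f₁,f₂}` with constant weights, where the tensor `A` (determined by
`⟨A(X,Y),Z⟩ = (δ/2)(⟨ℛ(X,Z),Y⟩ + ⟨ℛ(Y,Z),X⟩)`, `δ = f₂/f₁`) is given as data. -/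
noncomputable def nabGc (A : M.VF → M.VF → M.VF) (X Y : M.VF) : M.VF :=
  M.nab X Y - M.sm 2⁻¹ (M.calR X Y) + A X Y

end SasakiModel

namespace SasakiModel

variable (M : SasakiModel)

lemma inn_zero_left' (Y : M.VF) : M.inn 0 Y = 0 := by
  have := M.inn_smul_left 0 0 Y
  simpa using this

lemma inn_neg_left' (X Y : M.VF) : M.inn (-X) Y = -M.inn X Y := by
  rw [← neg_one_smul M.F X, M.inn_smul_left]; ring

lemma inn_sub_left' (X Y Z : M.VF) : M.inn (X - Y) Z = M.inn X Z - M.inn Y Z := by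
  rw [sub_eq_add_neg, M.inn_add_left, M.inn_neg_left', sub_eq_add_neg]

lemma inn_add_right' (X Y Z : M.VF) : M.inn X (Y + Z) = M.inn X Y + M.inn X Z := by
  rw [M.inn_symm, M.inn_add_left, M.inn_symm Y X, M.inn_symm Z X]

lemma inn_smul_right' (f : M.F) (X Y : M.VF) : M.inn X (f • Y) = f * M.inn X Y := by
  rw [M.inn_symm, M.inn_smul_left, M.inn_symm]

lemma inn_ext' (U W : M.VF) (h : ∀ Z, M.inn U Z = M.inn W Z) : U = W := by
  have h0 : U - W = 0 := by
    apply M.inn_nondeg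
    intro Z
    rw [M.inn_sub_left', h Z, sub_self]
  exact sub_eq_zero.mp h0

lemma Rop_zero₁' (Y Z : M.VF) : M.Rop 0 Y Z = 0 := by
  have := M.Rop_smul₁ 0 0 Y Z
  simpa using this

lemma Rop_zero₂' (X Z : M.VF) : M.Rop X 0 Z = 0 := by
  rw [M.Rop_antisymm, M.Rop_zero₁', neg_zero]

lemma calR_vert' (X Y : M.VF) : M.v (M.calR X Y) = M.calR X Y := by
  unfold calR
  calc M.v (M.Rop X Y M.xi) = M.v (M.Rop X Y (M.v M.xi)) := by rw [M.v_xi]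
    _ = M.Rop X Y (M.v M.xi) := M.Rop_v X Y M.xi
    _ = M.Rop X Y M.xi := by rw [M.v_xi]

lemma calR_h_zero' (X Y : M.VF) : M.h (M.calR X Y) = 0 := by
  rw [← M.calR_vert', M.h_of_v]

lemma calR_left0' (X Y : M.VF) (hX : M.h X = 0) : M.calR X Y = 0 := by
  unfold calR
  rw [M.Rop_horiz, hX, M.Rop_zero₁']

lemma calR_right0' (X Y : M.VF) (hY : M.h Y = 0) : M.calR X Y = 0 := by
  unfold calR
  rw [M.Rop_horiz, hY, M.Rop_zero₂']

lemma calR_add₁' (X X' Y : M.VF) : M.calR (X + X') Y = M.calR X Y + M.calR X' Y :=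
  M.Rop_add₁ X X' Y M.xi

lemma calR_smul₁' (f : M.F) (X Y : M.VF) : M.calR (f • X) Y = f • M.calR X Y :=
  M.Rop_smul₁ f X Y M.xi

lemma calR_neg₁' (X Y : M.VF) : M.calR (-X) Y = -M.calR X Y := by
  rw [← neg_one_smul M.F X, M.calR_smul₁', neg_one_smul]

lemma calR_sub₁' (X X' Y : M.VF) : M.calR (X - X') Y = M.calR X Y - M.calR X' Y := by
  rw [sub_eq_add_neg, M.calR_add₁', M.calR_neg₁', sub_eq_add_neg]

lemma calR_antisymm' (X Y : M.VF) : M.calR X Y = -M.calR Y X := by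
  unfold calR
  rw [M.Rop_antisymm]

lemma calR_sub₂' (X Y Y' : M.VF) : M.calR X (Y - Y') = M.calR X Y - M.calR X Y' := by
  rw [M.calR_antisymm' X (Y - Y'), M.calR_sub₁', M.calR_antisymm' Y X, M.calR_antisymm' Y' X]
  abel

lemma calR_smul₂' (f : M.F) (X Y : M.VF) : M.calR X (f • Y) = f • M.calR X Y := by
  rw [M.calR_antisymm' X (f • Y), M.calR_smul₁', M.calR_antisymm' Y X, smul_neg, neg_neg]

lemma nab_zero_right' (X : M.VF) : M.nab X 0 = 0 := by
  have := M.nab_leibniz X 0 0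
  simpa using this

lemma nab_neg_right' (X Y : M.VF) : M.nab X (-Y) = -M.nab X Y := by
  have h0 := M.nab_add_right X Y (-Y)
  rw [add_neg_cancel, M.nab_zero_right'] at h0
  exact eq_neg_of_add_eq_zero_right h0.symm

lemma nab_sub_right' (X Y Z : M.VF) : M.nab X (Y - Z) = M.nab X Y - M.nab X Z := by
  rw [sub_eq_add_neg, M.nab_add_right, M.nab_neg_right', sub_eq_add_neg]

lemma nab_sm_right' (c : ℝ) (X Y : M.VF) : M.nab X (M.sm c Y) = M.sm c (M.nab X Y) := by
  unfold sm
  rw [M.nab_leibniz, M.der_const, zero_smul, zero_add]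

lemma nab_neg_left' (X Y : M.VF) : M.nab (-X) Y = -M.nab X Y := by
  rw [← neg_one_smul M.F X, M.nab_smul_left, neg_one_smul]

lemma nab_sub_left' (X X' Y : M.VF) : M.nab (X - X') Y = M.nab X Y - M.nab X' Y := by
  rw [sub_eq_add_neg, M.nab_add_left, M.nab_neg_left', sub_eq_add_neg]

section Atensor

variable (c : ℝ) (A : M.VF → M.VF → M.VF)
  (hA : ∀ X Y Z, M.inn (A X Y) Z =
    M.cst c * (M.inn (M.calR X Z) Y + M.inn (M.calR Y Z) X))

include hA

lemma A_symm' (X Y : M.VF) : A X Y = A Y X := by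
  apply M.inn_ext'
  intro Z
  rw [hA, hA]
  ring

lemma A_horiz0' (X Y : M.VF) (hX : M.h X = X) (hY : M.h Y = Y) : A X Y = 0 := by
  apply M.inn_ext'
  intro Z
  rw [hA, M.inn_zero_left']
  have h1 : M.inn (M.calR X Z) Y = 0 := by
    rw [← hY, ← M.calR_vert' X Z, M.inn_symm, M.inn_hv]
  have h2 : M.inn (M.calR Y Z) X = 0 := by
    rw [← hX, ← M.calR_vert' Y Z, M.inn_symm, M.inn_hv]
  rw [h1, h2]
  ring

lemma A_add₁' (X X' Y : M.VF) : A (X + X') Y = A X Y + A X' Y := by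
  apply M.inn_ext'
  intro Z
  rw [M.inn_add_left, hA, hA, hA, M.calR_add₁', M.inn_add_left, M.inn_add_right']
  ring

lemma A_smul₁' (f : M.F) (X Y : M.VF) : A (f • X) Y = f • A X Y := by
  apply M.inn_ext'
  intro Z
  rw [M.inn_smul_left, hA, hA, M.calR_smul₁', M.inn_smul_left, M.inn_smul_right']
  ring

lemma A_neg₁' (X Y : M.VF) : A (-X) Y = -A X Y := by
  rw [← neg_one_smul M.F X, M.A_smul₁' c A hA, neg_one_smul]

lemma A_sub₁' (X X' Y : M.VF) : A (X - X') Y = A X Y - A X' Y := by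
  rw [sub_eq_add_neg, M.A_add₁' c A hA, M.A_neg₁' c A hA, sub_eq_add_neg]

lemma A_sub₂' (X Y Y' : M.VF) : A X (Y - Y') = A X Y - A X Y' := by
  rw [M.A_symm' c A hA X, M.A_sub₁' c A hA, M.A_symm' c A hA Y X, M.A_symm' c A hA Y' X]

lemma A_sm₂' (c' : ℝ) (X Y : M.VF) : A X (M.sm c' Y) = M.sm c' (A X Y) := by
  unfold sm
  rw [M.A_symm' c A hA X, M.A_smul₁' c A hA, M.A_symm' c A hA Y X]

end Atensor

lemma sm_zero' (c : ℝ) : M.sm c (0 : M.VF) = 0 := by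
  unfold sm; rw [smul_zero]

lemma sm_sub' (c : ℝ) (X Y : M.VF) : M.sm c (X - Y) = M.sm c X - M.sm c Y := by
  unfold sm; rw [smul_sub]

lemma calR_sm₂' (c' : ℝ) (X Y : M.VF) : M.calR X (M.sm c' Y) = M.sm c' (M.calR X Y) := by
  unfold sm; exact M.calR_smul₂' _ X Y

theorem curv_aux (c : ℝ) (A : M.VF → M.VF → M.VF)
    (hA : ∀ X Y Z, M.inn (A X Y) Z =
      M.cst c * (M.inn (M.calR X Z) Y + M.inn (M.calR Y Z) X))
    (x y z : M.VF) (hx : M.h x = x) (hy : M.h y = y) (hz : M.h z = z) :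
    M.curvOf (M.nabGc A) x y z =
      M.Rop x y z - M.sm 2⁻¹ (M.nabR x y z) + M.sm 2⁻¹ (M.nabR y x z)
        + A (M.calR x y) z - M.sm 2⁻¹ (A x (M.calR y z)) + M.sm 2⁻¹ (A y (M.calR x z)) := by
  have hnyz : M.h (M.nab y z) = M.nab y z := by
    have := M.nab_h y z; rwa [hz] at this
  have hnxz : M.h (M.nab x z) = M.nab x z := by
    have := M.nab_h x z; rwa [hz] at this
  have hnxy : M.h (M.nab x y) = M.nab x y := by
    have := M.nab_h x y; rwa [hy] at this
  have hnyx : M.h (M.nab y x) = M.nab y x := by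
    have := M.nab_h y x; rwa [hx] at this
  have hAyz : A y z = 0 := M.A_horiz0' c A hA y z hy hz
  have hAxz : A x z = 0 := M.A_horiz0' c A hA x z hx hz
  have hAxnyz : A x (M.nab y z) = 0 := M.A_horiz0' c A hA x _ hx hnyz
  have hAynxz : A y (M.nab x z) = 0 := M.A_horiz0' c A hA y _ hy hnxz
  have hcyz0 : M.calR x (M.calR y z) = 0 := M.calR_right0' x _ (M.calR_h_zero' y z)
  have hcxz0 : M.calR y (M.calR x z) = 0 := M.calR_right0' y _ (M.calR_h_zero' x z)
  have Elie : M.lie x y = M.nab x y - M.nab y x - M.calR x y := by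
    have ht := M.torsion_nab x y
    rw [show M.Rop x y M.xi = M.calR x y from rfl] at ht
    rw [← ht]; abel
  have hnl : M.nab (M.lie x y) z =
      M.nab x (M.nab y z) - M.nab y (M.nab x z) - M.Rop x y z := by
    have hc := M.curv_nab x y z
    rw [← hc]; abel
  have hclie : M.calR (M.lie x y) z = M.calR (M.nab x y) z - M.calR (M.nab y x) z := by
    rw [Elie, M.calR_sub₁', M.calR_sub₁',
      M.calR_left0' (M.calR x y) z (M.calR_h_zero' x y), sub_zero]
  have hAlie : A (M.lie x y) z = -A (M.calR x y) z := by
    rw [Elie, M.A_sub₁' c A hA, M.A_sub₁' c A hA,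
      M.A_horiz0' c A hA _ _ hnxy hz, M.A_horiz0' c A hA _ _ hnyx hz]
    abel
  have E1 : M.nabGc A y z = M.nab y z - M.sm 2⁻¹ (M.calR y z) := by
    unfold nabGc; rw [hAyz, add_zero]
  have E1' : M.nabGc A x z = M.nab x z - M.sm 2⁻¹ (M.calR x z) := by
    unfold nabGc; rw [hAxz, add_zero]
  have E2 : M.nabGc A x (M.nab y z - M.sm 2⁻¹ (M.calR y z)) =
      M.nab x (M.nab y z) - M.sm 2⁻¹ (M.nab x (M.calR y z))
        - M.sm 2⁻¹ (M.calR x (M.nab y z)) - M.sm 2⁻¹ (A x (M.calR y z)) := by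
    unfold nabGc
    rw [M.nab_sub_right', M.nab_sm_right', M.calR_sub₂', M.calR_sm₂', hcyz0,
      M.sm_zero', sub_zero, M.A_sub₂' c A hA, M.A_sm₂' c A hA, hAxnyz]
    abel
  have E2' : M.nabGc A y (M.nab x z - M.sm 2⁻¹ (M.calR x z)) =
      M.nab y (M.nab x z) - M.sm 2⁻¹ (M.nab y (M.calR x z))
        - M.sm 2⁻¹ (M.calR y (M.nab x z)) - M.sm 2⁻¹ (A y (M.calR x z)) := by
    unfold nabGc
    rw [M.nab_sub_right', M.nab_sm_right', M.calR_sub₂', M.calR_sm₂', hcxz0,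
      M.sm_zero', sub_zero, M.A_sub₂' c A hA, M.A_sm₂' c A hA, hAynxz]
    abel
  have E3 : M.nabGc A (M.lie x y) z =
      (M.nab x (M.nab y z) - M.nab y (M.nab x z) - M.Rop x y z)
        - M.sm 2⁻¹ (M.calR (M.nab x y) z) + M.sm 2⁻¹ (M.calR (M.nab y x) z)
        - A (M.calR x y) z := by
    unfold nabGc
    rw [hnl, hclie, hAlie, M.sm_sub']
    abel
  unfold curvOf nabR
  rw [E1, E1', E2, E2', E3, M.sm_sub', M.sm_sub', M.sm_sub', M.sm_sub']
  abel


end SasakiModel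

open SasakiModel in
/-- Let `f₁, f₂` be positive constants and `G = g^{f₁,f₂}`.  The
horizontal component of the curvature of `(TM,G)` on horizontal vectors is
`R^G(X^h,Y^h)Z^h = R(X^h,Y^h)Z^h − ½(∇_{X^h}ℛ)(Y^h,Z^h) + ½(∇_{Y^h}ℛ)(X^h,Z^h)
  + A(ℛ(X^h,Y^h),Z^h) − ½A(X^h,ℛ(Y^h,Z^h)) + ½A(Y^h,ℛ(X^h,Z^h))`. -/
theorem curvature_G_horizontal
    (M : SasakiModel) (f₁ f₂ : ℝ) (hf₁ : 0 < f₁) (hf₂ : 0 < f₂)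
    (A : M.VF → M.VF → M.VF)
    (hA : ∀ X Y Z, M.inn (A X Y) Z =
      M.cst (f₂ / f₁ / 2) * (M.inn (M.calR X Z) Y + M.inn (M.calR Y Z) X)) :
    ∀ X Y Z : M.VF,
      M.curvOf (M.nabGc A) (M.h X) (M.h Y) (M.h Z) =
        M.Rop (M.h X) (M.h Y) (M.h Z)
          - M.sm 2⁻¹ (M.nabR (M.h X) (M.h Y) (M.h Z))
          + M.sm 2⁻¹ (M.nabR (M.h Y) (M.h X) (M.h Z))
          + A (M.calR (M.h X) (M.h Y)) (M.h Z)
          - M.sm 2⁻¹ (A (M.h X) (M.calR (M.h Y) (M.h Z)))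
          + M.sm 2⁻¹ (A (M.h Y) (M.calR (M.h X) (M.h Z))) := by
  intro X Y Z
  exact M.curv_aux (f₂ / f₁ / 2) A hA (M.h X) (M.h Y) (M.h Z) (M.h_h X) (M.h_h Y) (M.h_h Z)
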